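/- The subspace g = ⟨A⟩ ⊕ 𝓔 ⊕ T𝓔 ⊕ ⋯ ⊕ T^{m−1}𝓔 of End_F(U) is a Lie subalgebra of gl(U) of dimension dim_F U + 1; explicitly, [A, T^j g(E)] = j·T^j g(E) for all g ∈ F[X] and 0 ≤ j < m, and the elements of 𝓔 ⊕ T𝓔 ⊕ ⋯ ⊕ T^{m−1}𝓔 commute with each other. In particular s = ⟨A⟩ ⊕ ⟨T⟩ is a 2-dimensional subalgebra with [A,T] = T. -/

import Mathlib

open Polynomial

/-- The shifted polynomial `p_{i+1}(X) = p₁(X + i)`: we use 0-based indexing for the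
paper's `p_i(X) = p₁(X + (i−1))`, `1 ≤ i ≤ m`. -/
noncomputable def pShift {F : Type*} [Field F] (q : Polynomial F) (i : ℕ) : Polynomial F :=
  q.comp (X + C (i : F))

/-- The `F[X]`-module `U = U₁ ⊕ ⋯ ⊕ U_m`, where `U_{i+1} = F[X]·u_{i+1} ≅
F[X]/(p_{i+1}^{s_{i+1}})` (0-based indexing). -/
def Uspace (F : Type*) [Field F] (q : Polynomial F) (m : ℕ) (s : Fin m → ℕ) : Type _ :=
  (i : Fin m) → Polynomial F ⧸ Ideal.span {(pShift q i) ^ (s i)}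

noncomputable instance {F : Type*} [Field F] (q : Polynomial F) (m : ℕ) (s : Fin m → ℕ) :
    AddCommGroup (Uspace F q m s) :=
  inferInstanceAs (AddCommGroup ((i : Fin m) → Polynomial F ⧸ Ideal.span {(pShift q i) ^ (s i)}))

noncomputable instance {F : Type*} [Field F] (q : Polynomial F) (m : ℕ) (s : Fin m → ℕ) :
    Module F (Uspace F q m s) :=
  inferInstanceAs (Module F ((i : Fin m) → Polynomial F ⧸ Ideal.span {(pShift q i) ^ (s i)}))

/-- The operator `A ∈ End_F(U)`: multiplication by `X`. -/
noncomputable def Aop (F : Type*) [Field F] (q : Polynomial F) (m : ℕ) (s : Fin m → ℕ) :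
    Module.End F (Uspace F q m s) :=
  LinearMap.pi fun i =>
    (LinearMap.mulLeft F (Ideal.Quotient.mk (Ideal.span {(pShift q i) ^ (s i)}) X)).comp
      (LinearMap.proj i)

/-- The operator `E ∈ End_F(U)`: the `F[X]`-linear map with `E u_i = (X + (i−1)) u_i`
(0-based: on the `i`-th component it is multiplication by `X + i`). -/
noncomputable def Eop (F : Type*) [Field F] (q : Polynomial F) (m : ℕ) (s : Fin m → ℕ) :
    Module.End F (Uspace F q m s) :=
  LinearMap.pi fun i =>
    (LinearMap.mulLeft F
        (Ideal.Quotient.mk (Ideal.span {(pShift q i) ^ (s i)}) (X + C (i : F)))).comp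
      (LinearMap.proj i)

/-- Componentwise multiplication by the polynomial `g` on `U` (the action `u ↦ g(X)·u`). -/
noncomputable def polySmul {F : Type*} [Field F] {q : Polynomial F} {m : ℕ} {s : Fin m → ℕ}
    (g : Polynomial F) (u : Uspace F q m s) : Uspace F q m s :=
  fun i => Ideal.Quotient.mk (Ideal.span {(pShift q i) ^ (s i)}) g * u i

/-- The canonical generator `u_{i+1}` of the summand `U_{i+1}` (0-based). -/
noncomputable def uGen (F : Type*) [Field F] (q : Polynomial F) (m : ℕ) (s : Fin m → ℕ)
    (i : Fin m) : Uspace F q m s :=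
  Pi.single i 1

/-- The standing assumptions on the data: `p₁ = q` is monic irreducible of degree `d`,
`m > 1`, and `s₁ ≥ s₂ ≥ ⋯ ≥ s_m ≥ 1`. -/
structure GoodData (F : Type*) [Field F] (q : Polynomial F) (d m : ℕ) (s : Fin m → ℕ) :
    Prop where
  monic : q.Monic
  irr : Irreducible q
  deg : q.natDegree = d
  hm : 1 < m
  dec : ∀ i j : Fin m, i ≤ j → s j ≤ s i
  pos : ∀ i, 1 ≤ s i

/-- `T` is the operator of the paper: the unique `F`-linear endomorphism of `U` with
`T u₁ = 0`, `T u_i = p_{i−1}(X)^{s_{i−1}−s_i} u_{i−1}` for `2 ≤ i ≤ m`, and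
`T(g(X+1)·u) = g(X)·(T u)` for all `g ∈ F[X]`, `u ∈ U`. -/
def IsTmap {F : Type*} [Field F] (q : Polynomial F) (m : ℕ) (s : Fin m → ℕ)
    (T : Module.End F (Uspace F q m s)) : Prop :=
  (∀ h0 : 0 < m, T (uGen F q m s ⟨0, h0⟩) = 0) ∧
  (∀ (i : ℕ) (hi : i + 1 < m),
      T (uGen F q m s ⟨i + 1, hi⟩) =
        polySmul ((pShift q i) ^ (s ⟨i, by omega⟩ - s ⟨i + 1, hi⟩))
          (uGen F q m s ⟨i, by omega⟩)) ∧
  (∀ (g : Polynomial F) (u : Uspace F q m s),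
      T (polySmul (g.comp (X + C 1)) u) = polySmul g (T u))

/-- The linear map `F[X] → End_F(U)`, `g ↦ T^j ∘ g(E)`, whose image is the subspace
`T^j·𝓔` of `End_F(U)`. -/
noncomputable def psiMap {F : Type*} [Field F] (q : Polynomial F) (m : ℕ) (s : Fin m → ℕ)
    (T : Module.End F (Uspace F q m s)) (j : ℕ) :
    Polynomial F →ₗ[F] Module.End F (Uspace F q m s) :=
  (LinearMap.mulLeft F (T ^ j)).comp (Polynomial.aeval (Eop F q m s)).toLinearMap

/-!
Everything rests on three commutation relations. The twisting rule `T (g(X+1) u) = g(X) T u`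
with `g = X` is `[A, T] = T`; `A` and `E` are both multiplication operators, so they commute;
and `T` commutes with `E` because `E` acts on the summand `U_i` as `X + i` while `T` lowers
both the summand index and the variable by one. Hence `T^j g(E) · T^k h(E) = T^{j+k} (gh)(E)`,
`ad A` acts on `T^j 𝓔` as the scalar `j`, and `⟨A⟩ + ∑ T^j 𝓔` is closed under brackets.

For the dimension (summands indexed from `0`, as in the definitions): `T^j q^{s_j}(E) = 0`,
since `q(E)` acts on `U_i` as `q(X + i)`, which kills `U_i` when `i ≥ j` because `s_i ≤ s_j`,
and `T^j` kills `U_i` for `i < j`. Conversely, if `∑_j T^j g_j(E) = 0`, apply it to `u_j` and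
read off the component in `U_0`: only the `j`-th term contributes, namely `g_j · q^{s_0 - s_j}`,
which must vanish mod `q^{s_0}`, so `q^{s_j} ∣ g_j`. Thus `∑ T^j 𝓔 ≅ ⊕ F[X]/(q^{s_j})` has
dimension `∑ d s_j = dim U`. Finally `A` is independent of everything commuting with `T`, as
`ad T` sends `A` to `-T ≠ 0`; the same argument gives `dim ⟨A, T⟩ = 2`.
-/

section Commutators

variable {R A : Type*} [CommRing R] [Ring A] [Algebra R A]

lemma commute_of_mem_iSup {ι : Type*} {N : ι → Submodule R A}
    (hN : ∀ i j, ∀ x ∈ N i, ∀ y ∈ N j, Commute x y) {x y : A}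
    (hx : x ∈ ⨆ i, N i) (hy : y ∈ ⨆ i, N i) : Commute x y := by
  refine Submodule.iSup_induction N (motive := (Commute · y)) hx (fun i x hx => ?_)
    (Commute.zero_left y) fun _ _ => Commute.add_left
  exact Submodule.iSup_induction N (motive := Commute x) hy (fun j y hy => hN i j x hx y hy)
    (Commute.zero_right x) fun _ _ => Commute.add_right

lemma commutator_mem_iSup {ι : Type*} {N : ι → Submodule R A} {a : A}
    (ha : ∀ i, ∀ x ∈ N i, a * x - x * a ∈ N i) {x : A} (hx : x ∈ ⨆ i, N i) :
    a * x - x * a ∈ ⨆ i, N i := by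
  refine Submodule.iSup_induction N (motive := fun x => a * x - x * a ∈ ⨆ i, N i) hx
    (fun i x hx => Submodule.mem_iSup_of_mem i (ha i x hx)) (by simp) fun x y hx hy => ?_
  rw [show a * (x + y) - (x + y) * a = (a * x - x * a) + (a * y - y * a) by noncomm_ring]
  exact add_mem hx hy

lemma commutator_mem_span_singleton_sup {a : A} {N : Submodule R A}
    (hN : ∀ x ∈ N, ∀ y ∈ N, Commute x y) (ha : ∀ x ∈ N, a * x - x * a ∈ N)
    {z w : A} (hz : z ∈ (R ∙ a) ⊔ N) (hw : w ∈ (R ∙ a) ⊔ N) :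
    z * w - w * z ∈ (R ∙ a) ⊔ N := by
  obtain ⟨_, hz₁, x, hx, rfl⟩ := Submodule.mem_sup.mp hz
  obtain ⟨_, hw₁, y, hy, rfl⟩ := Submodule.mem_sup.mp hw
  obtain ⟨c, rfl⟩ := Submodule.mem_span_singleton.mp hz₁
  obtain ⟨e, rfl⟩ := Submodule.mem_span_singleton.mp hw₁
  have hexpand : (c • a + x) * (e • a + y) - (e • a + y) * (c • a + x) =
      c • (a * y - y * a) - e • (a * x - x * a) + (x * y - y * x) := by
    simp only [add_mul, mul_add, smul_mul_assoc, mul_smul_comm, smul_sub,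
      smul_add, smul_smul, mul_comm e c]
    abel
  rw [hexpand, (hN x hx y hy).eq, sub_self, add_zero]
  exact Submodule.mem_sup_right (N.sub_mem (N.smul_mem c (ha y hy)) (N.smul_mem e (ha x hx)))

end Commutators

section CommutatorEqSelf

variable {K A : Type*} [Field K] [Ring A] [Algebra K A] {a t : A}

/-- `ad t` kills `x` but sends `a` to `-t`. -/
lemma eq_zero_of_smul_add_eq_zero (hat : a * t - t * a = t) (ht : t ≠ 0) {x : A}
    (hx : Commute t x) {c : K} (h : c • a + x = 0) : c = 0 := by
  have hct : c • t = 0 := by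
    have := congrArg (fun y => y * t - t * y) h
    simp only [add_mul, mul_add, smul_mul_assoc, mul_smul_comm, hx.eq, zero_mul, mul_zero,
      sub_zero] at this
    rw [← hat, smul_sub, ← neg_sub, ← this]
    abel
  exact (smul_eq_zero.mp hct).resolve_right ht

lemma finrank_span_sup_span_of_commutator_eq (hat : a * t - t * a = t) (ht : t ≠ 0) :
    Module.finrank K ((K ∙ a) ⊔ (K ∙ t) : Submodule K A) = 2 := by
  have hind : LinearIndependent K ![a, t] := by
    refine LinearIndependent.pair_iff.mpr fun c e h => ?_
    have hc := eq_zero_of_smul_add_eq_zero hat ht ((Commute.refl t).smul_right e) h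
    subst hc
    rw [zero_smul, zero_add] at h
    exact ⟨rfl, (smul_eq_zero.mp h).resolve_right ht⟩
  have := finrank_span_eq_card hind
  rwa [Matrix.range_cons_cons_empty, Submodule.span_insert, Fintype.card_fin] at this

end CommutatorEqSelf

section ShiftedPolynomials

variable {F : Type*} [Field F]

lemma comp_X_add_C_comp_X_add_C (g : F[X]) (a b : F) :
    (g.comp (X + C a)).comp (X + C b) = g.comp (X + C (a + b)) := by
  rw [comp_assoc, add_comp, X_comp, C_comp, add_assoc, ← C_add, add_comm b]

lemma comp_X_add_C_comp_X_add_C_neg (g : F[X]) (a : F) :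
    (g.comp (X + C a)).comp (X + C (-a)) = g := by
  rw [comp_X_add_C_comp_X_add_C, add_neg_cancel, C_0, add_zero, comp_X]

lemma pShift_comp_X_add_C_neg (q : F[X]) {k j i : ℕ} (h : k + j = i) :
    (pShift q i).comp (X + C (-(j : F))) = pShift q k := by
  rw [pShift, comp_X_add_C_comp_X_add_C, ← h, Nat.cast_add, add_neg_cancel_right, pShift]

lemma pShift_zero (q : F[X]) : pShift q 0 = q := by
  simp [pShift]

lemma natDegree_pShift (q : F[X]) (i : ℕ) : (pShift q i).natDegree = q.natDegree := by
  rw [pShift, natDegree_comp, natDegree_X_add_C, mul_one]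

lemma degree_pow_eq_of_monic {q : F[X]} (hq : q.Monic) {d : ℕ} (hd : q.natDegree = d) (n : ℕ) :
    (q ^ n).degree = ↑(d * n) := by
  rw [degree_eq_natDegree (hq.pow n).ne_zero, natDegree_pow, hd, mul_comm]

end ShiftedPolynomials

section Uspace

variable {F : Type*} [Field F] {q : F[X]} {m : ℕ} {s : Fin m → ℕ}

variable (q s) in
noncomputable def uSingle (i : Fin m) (h : F[X]) : Uspace F q m s :=
  Pi.single i (Ideal.Quotient.mk (Ideal.span {pShift q i ^ s i}) h)

lemma uSingle_apply_self (i : Fin m) (h : F[X]) :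
    uSingle q s i h i = Ideal.Quotient.mk (Ideal.span {pShift q i ^ s i}) h :=
  Pi.single_eq_same i _

lemma uSingle_apply_of_ne {i k : Fin m} (hki : k ≠ i) (h : F[X]) : uSingle q s i h k = 0 :=
  Pi.single_eq_of_ne hki _

lemma uSingle_add (i : Fin m) (h h' : F[X]) :
    uSingle q s i (h + h') = uSingle q s i h + uSingle q s i h' := by
  simp only [uSingle, map_add, Pi.single_add]
  rfl

lemma smul_uSingle (a : F) (i : Fin m) (h : F[X]) :
    a • uSingle q s i h = uSingle q s i (C a * h) := by
  rw [uSingle, uSingle, ← smul_eq_C_mul]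
  exact (Pi.single_smul i a _).symm

lemma uSingle_eq_zero_iff (i : Fin m) (h : F[X]) :
    uSingle q s i h = 0 ↔ pShift q i ^ s i ∣ h := by
  rw [← Ideal.mem_span_singleton, ← Ideal.Quotient.eq_zero_iff_mem, uSingle]
  exact Pi.single_eq_zero_iff

lemma uGen_eq_uSingle (i : Fin m) : uGen F q m s i = uSingle q s i 1 := by
  rw [uGen, uSingle, map_one]

lemma polySmul_uSingle (g : F[X]) (i : Fin m) (h : F[X]) :
    polySmul g (uSingle q s i h) = uSingle q s i (g * h) := by
  funext k
  rcases eq_or_ne k i with rfl | hk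
  · simp only [polySmul, uSingle_apply_self, map_mul]
  · simp only [polySmul, uSingle_apply_of_ne hk, mul_zero]

lemma polySmul_polySmul (g h : F[X]) (u : Uspace F q m s) :
    polySmul g (polySmul h u) = polySmul (g * h) u := by
  funext k
  simp only [polySmul, map_mul, mul_assoc]

lemma polySmul_zero (g : F[X]) : polySmul g (0 : Uspace F q m s) = 0 :=
  funext fun _ => mul_zero _

lemma Uspace.exists_eq_sum_uSingle (u : Uspace F q m s) :
    ∃ h : Fin m → F[X], u = ∑ i, uSingle q s i (h i) := by
  choose h hh using fun i => Ideal.Quotient.mk_surjective (u i)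
  refine ⟨h, ?_⟩
  simp only [uSingle, hh]
  exact (Finset.univ_sum_single (M := fun i : Fin m => F[X] ⧸ Ideal.span {pShift q i ^ s i}) u).symm

lemma Uspace.sum_apply {ι : Type*} (t : Finset ι) (f : ι → Uspace F q m s) (k : Fin m) :
    (∑ i ∈ t, f i) k = ∑ i ∈ t, f i k :=
  Finset.sum_apply (M := fun k : Fin m => F[X] ⧸ Ideal.span {pShift q k ^ s k}) k t f

lemma Uspace.end_ext {W W' : Module.End F (Uspace F q m s)}
    (H : ∀ i h, W (uSingle q s i h) = W' (uSingle q s i h)) : W = W' := by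
  ext u
  obtain ⟨h, rfl⟩ := Uspace.exists_eq_sum_uSingle u
  simp only [map_sum, H]

lemma Aop_apply (u : Uspace F q m s) : Aop F q m s u = polySmul X u := rfl

lemma Eop_apply (u : Uspace F q m s) (k : Fin m) :
    Eop F q m s u k = Ideal.Quotient.mk (Ideal.span {pShift q k ^ s k}) (X + C (k : F)) * u k :=
  rfl

lemma Eop_uSingle (i : Fin m) (h : F[X]) :
    Eop F q m s (uSingle q s i h) = uSingle q s i ((X + C (i : F)) * h) := by
  funext k
  rcases eq_or_ne k i with rfl | hk
  · rw [Eop_apply, uSingle_apply_self, uSingle_apply_self, map_mul]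
  · rw [Eop_apply, uSingle_apply_of_ne hk, uSingle_apply_of_ne hk, mul_zero]

lemma aeval_Eop_uSingle (g : F[X]) (i : Fin m) (h : F[X]) :
    aeval (Eop F q m s) g (uSingle q s i h) = uSingle q s i (g.comp (X + C (i : F)) * h) := by
  induction g using Polynomial.induction_on' with
  | add g g' hg hg' => rw [map_add, LinearMap.add_apply, hg, hg', add_comp, add_mul, uSingle_add]
  | monomial n a =>
    have hpow : ∀ n : ℕ, (Eop F q m s ^ n) (uSingle q s i h) =
        uSingle q s i ((X + C (i : F)) ^ n * h) := by
      intro n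
      induction n with
      | zero => simp
      | succ n ih => rw [pow_succ', Module.End.mul_apply, ih, Eop_uSingle, pow_succ', mul_assoc]
    rw [aeval_monomial, Module.End.mul_apply, hpow, Module.algebraMap_end_apply, smul_uSingle,
      monomial_comp, mul_assoc]

lemma commute_Aop_Eop : Commute (Aop F q m s) (Eop F q m s) :=
  LinearMap.ext fun u => funext fun k =>
    show Aop F q m s (Eop F q m s u) k = Eop F q m s (Aop F q m s u) k from
      mul_left_comm (Ideal.Quotient.mk _ X) (Ideal.Quotient.mk _ (X + C (k : F))) (u k)

lemma commute_Aop_aeval_Eop (g : F[X]) : Commute (Aop F q m s) (aeval (Eop F q m s) g) :=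
  Algebra.commute_of_mem_adjoin_singleton_of_commute (aeval_mem_adjoin_singleton F _)
    commute_Aop_Eop

lemma psiMap_apply (T : Module.End F (Uspace F q m s)) (j : ℕ) (g : F[X]) :
    psiMap q m s T j g = T ^ j * aeval (Eop F q m s) g :=
  rfl

end Uspace

namespace IsTmap

variable {F : Type*} [Field F] {q : F[X]} {m : ℕ} {s : Fin m → ℕ}
  {T : Module.End F (Uspace F q m s)} (hT : IsTmap q m s T)
include hT

lemma apply_polySmul (h : F[X]) (u : Uspace F q m s) :
    T (polySmul h u) = polySmul (h.comp (X + C (-1))) (T u) := by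
  conv_lhs => rw [← comp_X_add_C_comp_X_add_C_neg h (-1), neg_neg]
  exact hT.2.2 _ u

lemma apply_uSingle_zero (h0 : 0 < m) (h : F[X]) : T (uSingle q s ⟨0, h0⟩ h) = 0 := by
  rw [← mul_one h, ← polySmul_uSingle, ← uGen_eq_uSingle, hT.apply_polySmul, hT.1 h0,
    polySmul_zero]

lemma apply_uSingle_succ (k : ℕ) (hk : k + 1 < m) (h : F[X]) :
    T (uSingle q s ⟨k + 1, hk⟩ h) =
      uSingle q s ⟨k, by omega⟩
        (h.comp (X + C (-1)) * pShift q k ^ (s ⟨k, by omega⟩ - s ⟨k + 1, hk⟩)) := by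
  rw [← mul_one h, ← polySmul_uSingle, ← uGen_eq_uSingle, hT.apply_polySmul, hT.2.1 k hk,
    polySmul_polySmul, uGen_eq_uSingle, polySmul_uSingle, mul_one, mul_one]

lemma pow_apply_uSingle (hs : Antitone s) {j : ℕ} {i k : Fin m} (hki : (k : ℕ) + j = i)
    (h : F[X]) :
    (T ^ j) (uSingle q s i h) =
      uSingle q s k (h.comp (X + C (-(j : F))) * pShift q k ^ (s k - s i)) := by
  induction j generalizing i h with
  | zero =>
    obtain rfl : k = i := Fin.ext hki
    simp
  | succ j ih =>
    obtain ⟨i, hi⟩ := i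
    obtain rfl : i = (k + j) + 1 := hki.symm
    have hkj : k + j < m := by omega
    rw [pow_succ, Module.End.mul_apply, hT.apply_uSingle_succ _ hi, ih (i := ⟨k + j, hkj⟩) rfl,
      mul_comp, pow_comp, pShift_comp_X_add_C_neg q rfl, comp_X_add_C_comp_X_add_C, mul_assoc,
      ← pow_add, Nat.cast_succ, neg_add_rev]
    have hs₁ : s ⟨k + j + 1, hi⟩ ≤ s ⟨k + j, hkj⟩ := hs (Fin.mk_le_mk.mpr (by omega))
    have hs₂ : s ⟨k + j, hkj⟩ ≤ s k := hs (Fin.mk_le_mk.mpr (by omega))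
    congr 3
    omega

lemma pow_apply_uSingle_of_lt {j : ℕ} {i : Fin m} (hij : (i : ℕ) < j) (h : F[X]) :
    (T ^ j) (uSingle q s i h) = 0 := by
  have hkill : ∀ (n : ℕ) (hn : n < m) (h : F[X]), (T ^ (n + 1)) (uSingle q s ⟨n, hn⟩ h) = 0 := by
    intro n
    induction n with
    | zero => intro hn h; rw [pow_one, hT.apply_uSingle_zero]
    | succ n ih =>
      intro hn h
      rw [pow_succ, Module.End.mul_apply, hT.apply_uSingle_succ, ih]
  obtain ⟨n, rfl⟩ := Nat.exists_eq_add_of_lt hij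
  rw [show (i : ℕ) + n + 1 = n + (i + 1) by omega, pow_add, Module.End.mul_apply,
    hkill i i.2, map_zero]

lemma Aop_mul_sub_mul_Aop : Aop F q m s * T - T * Aop F q m s = T := by
  ext u
  have key := hT.2.2 X u
  rw [X_comp] at key
  have hXu : polySmul (X + C 1) u = Aop F q m s u + u := by
    funext k
    simp only [polySmul, map_add, map_one, add_mul, one_mul]
    rfl
  rw [hXu, map_add, ← Aop_apply] at key
  rw [LinearMap.sub_apply, Module.End.mul_apply, Module.End.mul_apply, ← key, add_sub_cancel_left]

lemma commute_Eop : Commute T (Eop F q m s) := by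
  refine Uspace.end_ext fun ⟨i, hi⟩ h => ?_
  rw [Module.End.mul_apply, Module.End.mul_apply, Eop_uSingle]
  cases i with
  | zero => rw [hT.apply_uSingle_zero, hT.apply_uSingle_zero, map_zero]
  | succ k =>
    rw [hT.apply_uSingle_succ, hT.apply_uSingle_succ, Eop_uSingle, mul_comp, add_comp, X_comp,
      C_comp, ← mul_assoc, add_assoc, ← C_add]
    push_cast
    ring_nf

lemma commute_aeval_Eop (g : F[X]) : Commute T (aeval (Eop F q m s) g) :=
  Algebra.commute_of_mem_adjoin_singleton_of_commute (aeval_mem_adjoin_singleton F _)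
    hT.commute_Eop

lemma psiMap_mul (j k : ℕ) (g h : F[X]) :
    psiMap q m s T j g * psiMap q m s T k h = psiMap q m s T (j + k) (g * h) := by
  rw [psiMap_apply, psiMap_apply, psiMap_apply, mul_assoc, ← mul_assoc (aeval _ g),
    ← ((hT.commute_aeval_Eop g).pow_left k).eq, mul_assoc, ← mul_assoc, ← pow_add, ← map_mul]

lemma psiMap_commute (j k : ℕ) (g h : F[X]) :
    Commute (psiMap q m s T j g) (psiMap q m s T k h) := by
  rw [Commute, SemiconjBy, hT.psiMap_mul, hT.psiMap_mul, add_comm, mul_comm]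

lemma commute_psiMap (j : ℕ) (g : F[X]) : Commute T (psiMap q m s T j g) := by
  simpa [psiMap_apply] using hT.psiMap_commute 1 j 1 g

lemma Aop_mul_pow_sub_pow_mul_Aop (j : ℕ) :
    Aop F q m s * T ^ j - T ^ j * Aop F q m s = (j : F) • T ^ j := by
  induction j with
  | zero => simp
  | succ j ih =>
    rw [pow_succ, ← mul_assoc, eq_add_of_sub_eq ih, add_mul, smul_mul_assoc, mul_assoc,
      eq_add_of_sub_eq hT.Aop_mul_sub_mul_Aop, Nat.cast_succ, add_smul, one_smul]
    noncomm_ring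

lemma Aop_mul_psiMap_sub_psiMap_mul_Aop (j : ℕ) (g : F[X]) :
    Aop F q m s * psiMap q m s T j g - psiMap q m s T j g * Aop F q m s =
      (j : F) • psiMap q m s T j g := by
  rw [psiMap_apply, mul_assoc _ _ (Aop F q m s), ← (commute_Aop_aeval_Eop g).eq, ← mul_assoc,
    ← mul_assoc, ← sub_mul, hT.Aop_mul_pow_sub_pow_mul_Aop, smul_mul_assoc]

lemma ne_zero {d : ℕ} (hdata : GoodData F q d m s) : T ≠ 0 := by
  intro hT0
  have h := hT.apply_uSingle_succ 0 hdata.hm 1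
  rw [hT0, LinearMap.zero_apply, eq_comm, uSingle_eq_zero_iff, one_comp, one_mul] at h
  change pShift q 0 ^ _ ∣ pShift q 0 ^ _ at h
  rw [pShift_zero, pow_dvd_pow_iff hdata.monic.ne_zero hdata.irr.not_isUnit] at h
  have := hdata.pos ⟨0 + 1, hdata.hm⟩
  have := hdata.pos ⟨0, Nat.zero_lt_of_lt hdata.hm⟩
  omega

lemma psiMap_pow_eq_zero (hs : Antitone s) (j : Fin m) : psiMap q m s T j (q ^ s j) = 0 := by
  refine Uspace.end_ext fun i h => ?_
  rw [psiMap_apply, Module.End.mul_apply, aeval_Eop_uSingle, LinearMap.zero_apply, pow_comp]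
  change (T ^ (j : ℕ)) (uSingle q s i (pShift q i ^ s j * h)) = 0
  rcases lt_or_ge (i : ℕ) j with hij | hji
  · exact hT.pow_apply_uSingle_of_lt hij _
  · rw [(uSingle_eq_zero_iff i _).mpr (dvd_mul_of_dvd_left (pow_dvd_pow _ (hs hji)) h), map_zero]

lemma psiMap_modByMonic (hs : Antitone s) (j : Fin m) (g : F[X]) :
    psiMap q m s T j (g %ₘ q ^ s j) = psiMap q m s T j g := by
  have hmul : psiMap q m s T j (q ^ s j * (g /ₘ q ^ s j)) = 0 := by
    rw [psiMap_apply, map_mul, ← mul_assoc, ← psiMap_apply, hT.psiMap_pow_eq_zero hs, zero_mul]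
  rw [modByMonic_eq_sub_mul_div, map_sub, hmul, sub_zero]

lemma dvd_of_sum_psiMap_eq_zero (hs : Antitone s) (hq : q ≠ 0) {g : Fin m → F[X]}
    (hg : ∑ j : Fin m, psiMap q m s T j (g j) = 0) (j : Fin m) : q ^ s j ∣ g j := by
  set o : Fin m := ⟨0, j.pos⟩
  have hdiag :
      psiMap q m s T j (g j) (uSingle q s j 1) = uSingle q s o (g j * q ^ (s o - s j)) := by
    rw [psiMap_apply, Module.End.mul_apply, aeval_Eop_uSingle,
      hT.pow_apply_uSingle hs (k := o) (zero_add _), mul_one, comp_X_add_C_comp_X_add_C_neg]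
    exact congrArg (fun p => uSingle q s o (g j * p ^ _)) (pShift_zero q)
  have hoff : ∀ j' ≠ j, psiMap q m s T j' (g j') (uSingle q s j 1) o = 0 := by
    intro j' hj'
    rw [psiMap_apply, Module.End.mul_apply, aeval_Eop_uSingle]
    rcases lt_or_gt_of_ne (Fin.val_ne_of_ne hj') with hlt | hgt
    · rw [hT.pow_apply_uSingle hs (k := ⟨j - j', by omega⟩) (Nat.sub_add_cancel hlt.le)]
      exact uSingle_apply_of_ne (Fin.ne_of_val_ne (by simp [o]; omega)) _
    · rw [hT.pow_apply_uSingle_of_lt hgt]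
      rfl
  have happ : ∑ j' : Fin m, psiMap q m s T j' (g j') (uSingle q s j 1) o = 0 := by
    rw [← Uspace.sum_apply, ← LinearMap.sum_apply, hg]
    rfl
  rw [Finset.sum_eq_single j (fun j' _ hj' => hoff j' hj') (by simp), hdiag, uSingle_apply_self,
    Ideal.Quotient.eq_zero_iff_mem, Ideal.mem_span_singleton] at happ
  change pShift q 0 ^ _ ∣ _ at happ
  have hsplit : q ^ s o = q ^ (s o - s j) * q ^ s j := by
    rw [← pow_add, Nat.sub_add_cancel (hs (Fin.le_def.mpr (Nat.zero_le _)))]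
  rw [pShift_zero, hsplit, mul_comm (g j)] at happ
  exact (mul_dvd_mul_iff_left (pow_ne_zero _ hq)).mp happ

end IsTmap

section Dimension

variable {F : Type*} [Field F] {q : F[X]} {d m : ℕ} {s : Fin m → ℕ}

lemma finrank_Uspace (hq : q.Monic) (hd : q.natDegree = d) :
    Module.finrank F (Uspace F q m s) = ∑ i, d * s i := by
  have hmonic : ∀ i : Fin m, (pShift q i ^ s i).Monic := fun i => (hq.comp_X_add_C _).pow _
  have : ∀ i : Fin m, Module.Finite F (F[X] ⧸ Ideal.span {pShift q i ^ s i}) :=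
    fun i => (AdjoinRoot.powerBasis' (hmonic i)).finite
  refine (Module.finrank_pi_fintype F).trans (Finset.sum_congr rfl fun i _ => ?_)
  refine (AdjoinRoot.powerBasis' (hmonic i)).finrank.trans ?_
  rw [AdjoinRoot.powerBasis'_dim, natDegree_pow, natDegree_pShift, hd, mul_comm]

variable (q d s) in
/-- `(g_j)_j ↦ ∑_j T^j g_j(E)`, with `deg g_j < d s_j` picking representatives of
`F[X]/(q^{s_j}) ≅ T^j 𝓔`. -/
noncomputable def sumPsiMap (T : Module.End F (Uspace F q m s)) :
    ((j : Fin m) → degreeLT F (d * s j)) →ₗ[F] Module.End F (Uspace F q m s) :=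
  ∑ j : Fin m, psiMap q m s T j ∘ₗ (degreeLT F (d * s j)).subtype ∘ₗ LinearMap.proj j

lemma sumPsiMap_apply (T : Module.End F (Uspace F q m s))
    (g : (j : Fin m) → degreeLT F (d * s j)) :
    sumPsiMap q d s T g = ∑ j : Fin m, psiMap q m s T j (g j) := by
  simp [sumPsiMap]

variable {T : Module.End F (Uspace F q m s)} (hT : IsTmap q m s T)
include hT

lemma IsTmap.range_sumPsiMap (hs : Antitone s) (hq : q.Monic) (hd : q.natDegree = d) :
    LinearMap.range (sumPsiMap q d s T) = ⨆ j : Fin m, LinearMap.range (psiMap q m s T j) := by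
  refine le_antisymm ?_ (iSup_le fun j => ?_)
  · rintro _ ⟨g, rfl⟩
    rw [sumPsiMap_apply]
    exact Submodule.sum_mem _ fun j _ => Submodule.mem_iSup_of_mem j (LinearMap.mem_range_self _ _)
  · rintro _ ⟨g, rfl⟩
    have hdeg : g %ₘ q ^ s j ∈ degreeLT F (d * s j) := by
      rw [mem_degreeLT, ← degree_pow_eq_of_monic hq hd]
      exact degree_modByMonic_lt g (hq.pow _)
    refine ⟨Pi.single j ⟨_, hdeg⟩, ?_⟩
    rw [sumPsiMap_apply, Finset.sum_eq_single j (fun j' _ hj' => ?_) (by simp), Pi.single_eq_same,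
      hT.psiMap_modByMonic hs]
    rw [Pi.single_eq_of_ne hj', ZeroMemClass.coe_zero, map_zero]

lemma IsTmap.sumPsiMap_injective (hs : Antitone s) (hq : q.Monic) (hd : q.natDegree = d) :
    Function.Injective (sumPsiMap q d s T) := by
  rw [← LinearMap.ker_eq_bot, LinearMap.ker_eq_bot']
  intro g hg
  funext j
  have hdvd := hT.dvd_of_sum_psiMap_eq_zero hs hq.ne_zero ((sumPsiMap_apply T g).symm.trans hg) j
  refine Subtype.ext (eq_zero_of_dvd_of_degree_lt hdvd ?_)
  rw [degree_pow_eq_of_monic hq hd]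
  exact mem_degreeLT.mp (g j).2

lemma IsTmap.finrank_span_Aop_sup_iSup_range_psiMap (hdata : GoodData F q d m s) :
    Module.finrank F ((F ∙ Aop F q m s) ⊔ ⨆ j : Fin m, LinearMap.range (psiMap q m s T j) :
      Submodule F (Module.End F (Uspace F q m s))) = ∑ j, d * s j + 1 := by
  set Φ := (LinearMap.toSpanSingleton F _ (Aop F q m s)).coprod (sumPsiMap q d s T)
  have hrange : LinearMap.range Φ =
      (F ∙ Aop F q m s) ⊔ ⨆ j : Fin m, LinearMap.range (psiMap q m s T j) := by
    rw [LinearMap.range_coprod, LinearMap.range_toSpanSingleton,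
      hT.range_sumPsiMap hdata.dec hdata.monic hdata.deg]
  have hinj : Function.Injective Φ := by
    rw [← LinearMap.ker_eq_bot, LinearMap.ker_eq_bot']
    rintro ⟨c, g⟩ h
    rw [LinearMap.coprod_apply, LinearMap.toSpanSingleton_apply] at h
    have hcomm : Commute T (sumPsiMap q d s T g) := by
      rw [sumPsiMap_apply]
      exact Commute.sum_right _ _ _ fun j _ => hT.commute_psiMap j _
    obtain rfl := eq_zero_of_smul_add_eq_zero hT.Aop_mul_sub_mul_Aop (hT.ne_zero hdata) hcomm h
    simp only [zero_smul, zero_add] at h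
    rw [hT.sumPsiMap_injective hdata.dec hdata.monic hdata.deg (h.trans (map_zero _).symm),
      Prod.mk_zero_zero]
  have : ∀ j : Fin m, Module.finrank F (degreeLT F (d * s j)) = d * s j := fun j => by
    rw [(degreeLTEquiv F (d * s j)).finrank_eq, Module.finrank_fin_fun]
  rw [← hrange, LinearMap.finrank_range_of_inj hinj, Module.finrank_prod, Module.finrank_self,
    Module.finrank_pi_fintype, add_comm]
  simp only [this]

end Dimension

/-- The subspace `g = ⟨A⟩ ⊕ 𝓔 ⊕ T𝓔 ⊕ ⋯ ⊕ T^{m−1}𝓔` of `End_F(U)` is a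
Lie subalgebra of `gl(U)` (it is closed under commutators) of dimension `dim_F U + 1`;
explicitly `[A, T^j g(E)] = j·T^j g(E)` for all `g ∈ F[X]`, `0 ≤ j < m`, and the elements
of `𝓔 ⊕ T𝓔 ⊕ ⋯ ⊕ T^{m−1}𝓔` commute with each other.  In particular `s = ⟨A⟩ ⊕ ⟨T⟩` is a
2-dimensional subalgebra with `[A, T] = T`. -/
theorem lie_subalgebra_A_E_T
    {F : Type*} [Field F] (q : Polynomial F) (d m : ℕ) (s : Fin m → ℕ)
    (hdata : GoodData F q d m s)
    (T : Module.End F (Uspace F q m s)) (hT : IsTmap q m s T) :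
    (∀ z w : Module.End F (Uspace F q m s),
        z ∈ (F ∙ Aop F q m s) ⊔ (⨆ j : Fin m, LinearMap.range (psiMap q m s T j)) →
        w ∈ (F ∙ Aop F q m s) ⊔ (⨆ j : Fin m, LinearMap.range (psiMap q m s T j)) →
        z * w - w * z ∈
          (F ∙ Aop F q m s) ⊔ (⨆ j : Fin m, LinearMap.range (psiMap q m s T j))) ∧
    Module.finrank F
        ((F ∙ Aop F q m s) ⊔ (⨆ j : Fin m, LinearMap.range (psiMap q m s T j)) :
          Submodule F (Module.End F (Uspace F q m s))) =
      Module.finrank F (Uspace F q m s) + 1 ∧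
    (∀ (g : Polynomial F) (j : ℕ), j < m →
        Aop F q m s * psiMap q m s T j g - psiMap q m s T j g * Aop F q m s =
          (j : F) • psiMap q m s T j g) ∧
    (∀ (g h : Polynomial F) (j k : ℕ), j < m → k < m →
        psiMap q m s T j g * psiMap q m s T k h = psiMap q m s T k h * psiMap q m s T j g) ∧
    Module.finrank F ((F ∙ Aop F q m s) ⊔ (F ∙ T) :
        Submodule F (Module.End F (Uspace F q m s))) = 2 ∧
    Aop F q m s * T - T * Aop F q m s = T := by
  set N : Submodule F (Module.End F (Uspace F q m s)) :=
    ⨆ j : Fin m, LinearMap.range (psiMap q m s T j)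
  have hcomm : ∀ x ∈ N, ∀ y ∈ N, Commute x y :=
    fun x hx y hy => commute_of_mem_iSup (by
      rintro i j _ ⟨g, rfl⟩ _ ⟨h, rfl⟩
      exact hT.psiMap_commute i j g h) hx hy
  have had : ∀ x ∈ N, Aop F q m s * x - x * Aop F q m s ∈ N :=
    fun x => commutator_mem_iSup (by
      rintro j _ ⟨g, rfl⟩
      rw [hT.Aop_mul_psiMap_sub_psiMap_mul_Aop]
      exact Submodule.smul_mem _ _ ⟨g, rfl⟩)
  refine ⟨fun z w => commutator_mem_span_singleton_sup hcomm had, ?_,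
    fun g j _ => hT.Aop_mul_psiMap_sub_psiMap_mul_Aop j g,
    fun g h j k _ _ => (hT.psiMap_commute j k g h).eq,
    finrank_span_sup_span_of_commutator_eq hT.Aop_mul_sub_mul_Aop (hT.ne_zero hdata),
    hT.Aop_mul_sub_mul_Aop⟩
  rw [hT.finrank_span_Aop_sup_iSup_range_psiMap hdata, finrank_Uspace hdata.monic hdata.deg]
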